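/- The 2D DRT at the final stage computes discrete line sums: with N = 2^n and f : {0,...,N-1}² → ℤ extended by zero, the stage-n partial transform satisfies f^n(s, d) = Σ_{u=0}^{N-1} f(u, L^n_s(u) + d) for every slope s ∈ {0,...,N-1} and displacement d ∈ {-(N-1),...,N-1}, where L^n_s(u) is the discrete line function applied to the binary digits of u. -/

import Mathlib

open Finset

/-- Closed-form discrete line `l^n_s(u_0,...,u_{n-1})`. -/
def dline (n s : ℕ) (u : ℕ → ℕ) : ℕ :=
  ∑ i ∈ Finset.range n, u (n - 1 - i) * ((s / 2 ^ i + 1) / 2)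

/-- `i`-th binary digit of `k` (least significant first). -/
def bit (k i : ℕ) : ℕ := k / 2 ^ i % 2

/-- Discrete line applied to the binary digits of `k`. -/
def Lline (n s k : ℕ) : ℕ := dline n s (bit k)

/-- The iterative multiscale 2D DRT: stage 0 reads the input, each stage applies the
two-scale recursion `f^{m+1}((s',σ),v,d) = f^m(σ,(0,v),d) + f^m(σ,(1,v),d+s'+λ(σ))`,
with slope and block indices in decimal. -/
def drtStage (f : ℤ → ℤ → ℤ) : ℕ → ℕ → ℕ → ℤ → ℤ
  | 0, _, v, d => f (v : ℤ) d
  | m + 1, s, v, d =>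
      drtStage f m (s / 2) (2 * v) d +
      drtStage f m (s / 2) (2 * v + 1) (d + (s % 2 : ℤ) + (s / 2 : ℤ))

/-! Stage `m` at block `v` already sums `f` along discrete lines over the `2 ^ m` columns of
block `v`, for every `v`; by induction on `m`:
the two halves of the range `2 ^ (m + 1)` are the points whose top binary digit is `0` or `1`,
and a top digit `1` shifts the discrete line by `⌈s / 2⌉ = s % 2 + s / 2`, exactly the offset
added by the two-scale recursion. -/

lemma dline_succ (m s : ℕ) (w : ℕ → ℕ) :
    dline (m + 1) s w = w m * ((s + 1) / 2) + dline m (s / 2) w := by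
  rw [dline, sum_range_succ', add_comm]
  congr 1
  · simp
  · refine sum_congr rfl fun i hi => ?_
    rw [show m + 1 - 1 - (i + 1) = m - 1 - i by omega, pow_succ', ← Nat.div_div_eq_div_mul]

lemma dline_congr {m : ℕ} (s : ℕ) {w w' : ℕ → ℕ} (h : ∀ j < m, w j = w' j) :
    dline m s w = dline m s w' :=
  sum_congr rfl fun i hi => by rw [h _ (by simp at hi; omega)]

lemma bit_two_pow_mul_add_of_lt {m b u j : ℕ} (hj : j < m) :
    bit (2 ^ m * b + u) j = bit u j := by
  have hpow : 2 ^ m = 2 ^ j * 2 * 2 ^ (m - 1 - j) := by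
    rw [← pow_succ, ← pow_add]; congr 1; omega
  rw [bit, bit, hpow, mul_assoc, mul_assoc, add_comm, Nat.add_mul_div_left _ _ (by positivity),
    Nat.add_mul_mod_self_left]

lemma bit_two_pow_mul_add_self {m b u : ℕ} (hu : u < 2 ^ m) (hb : b < 2) :
    bit (2 ^ m * b + u) m = b := by
  rw [bit, add_comm, Nat.add_mul_div_left _ _ (by positivity), Nat.div_eq_of_lt hu, zero_add,
    Nat.mod_eq_of_lt hb]

lemma Lline_succ_two_pow_mul_add {m b u : ℕ} (s : ℕ) (hu : u < 2 ^ m) (hb : b < 2) :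
    Lline (m + 1) s (2 ^ m * b + u) = b * ((s + 1) / 2) + Lline m (s / 2) u := by
  rw [Lline, dline_succ, bit_two_pow_mul_add_self hu hb, Lline,
    dline_congr _ fun j hj => bit_two_pow_mul_add_of_lt hj]

lemma drtStage_eq_sum (f : ℤ → ℤ → ℤ) (m s v : ℕ) (d : ℤ) :
    drtStage f m s v d =
      ∑ u ∈ range (2 ^ m), f ((2 ^ m * v + u : ℕ) : ℤ) ((Lline m s u : ℤ) + d) := by
  induction m generalizing s v d with
  | zero => simp [drtStage, Lline, dline]
  | succ m ih =>
    have hlow (u : ℕ) (hu : u < 2 ^ m) : Lline (m + 1) s u = Lline m (s / 2) u := by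
      simpa using Lline_succ_two_pow_mul_add (b := 0) s hu
    have hhigh (u : ℕ) (hu : u < 2 ^ m) :
        Lline (m + 1) s (2 ^ m + u) = (s + 1) / 2 + Lline m (s / 2) u := by
      simpa using Lline_succ_two_pow_mul_add (b := 1) s hu
    have hslope : (s + 1) / 2 = s % 2 + s / 2 := by omega
    rw [drtStage, ih, ih, pow_succ, mul_two, sum_range_add]
    congr 1 <;> refine sum_congr rfl fun u hu => ?_ <;> rw [mem_range] at hu
    · rw [hlow u hu]; congr 2; ring
    · rw [hhigh u hu, hslope]; push_cast; congr 1 <;> ring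

theorem drt2_final_stage_general (n : ℕ) (f : ℤ → ℤ → ℤ)
    (s : ℕ) (d : ℤ) :
    drtStage f n s 0 d = ∑ u ∈ Finset.range (2 ^ n), f (u : ℤ) ((Lline n s u : ℤ) + d) := by
  simp [drtStage_eq_sum]

theorem drt2_final_stage (n : ℕ) (f : ℤ → ℤ → ℤ)
    (hf : ∀ x y : ℤ, x < 0 ∨ (2 : ℤ) ^ n ≤ x ∨ y < 0 ∨ (2 : ℤ) ^ n ≤ y → f x y = 0)
    (s : ℕ) (hs : s < 2 ^ n) (d : ℤ)
    (hd : -((2 : ℤ) ^ n - 1) ≤ d ∧ d ≤ (2 : ℤ) ^ n - 1) :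
    drtStage f n s 0 d = ∑ u ∈ Finset.range (2 ^ n), f (u : ℤ) ((Lline n s u : ℤ) + d) :=
  drt2_final_stage_general n f s d
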